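/- Let H be a connected finite simple graph of diameter two and order n that has no true twins (no two distinct vertices x, y satisfy N[x] = N[y]). Then dim_s(H) = n − ω(H). -/

import Mathlib

open SimpleGraph

/-- A vertex `w` strongly resolves the pair `u`, `v` if `v` lies on some shortest `u`–`w`
path or `u` lies on some shortest `v`–`w` path. -/
def StronglyResolves {V : Type*} (G : SimpleGraph V) (w u v : V) : Prop :=
  G.dist u w = G.dist u v + G.dist v w ∨ G.dist v w = G.dist v u + G.dist u w

/-- `S` is a strong resolving set for `G` if every pair of distinct vertices is strongly
resolved by some vertex of `S`. -/
def IsStrongResolvingSet {V : Type*} (G : SimpleGraph V) (S : Set V) : Prop :=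
  ∀ u v : V, u ≠ v → ∃ w ∈ S, StronglyResolves G w u v

/-- The strong metric dimension: the minimum cardinality of a strong resolving set. -/
noncomputable def strongDim {V : Type*} (G : SimpleGraph V) [Fintype V] : ℕ :=
  sInf {k | ∃ S : Finset V, IsStrongResolvingSet G ↑S ∧ S.card = k}

/-- The closed neighborhood of a vertex. -/
def closedNbhd {V : Type*} (G : SimpleGraph V) (v : V) : Set V :=
  insert v (G.neighborSet v)

/-- A twin-free clique: a clique containing no pair of true twins. -/
def IsTwinFreeClique {V : Type*} (G : SimpleGraph V) (X : Finset V) : Prop :=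
  G.IsClique ↑X ∧ ∀ u ∈ X, ∀ v ∈ X, u ≠ v → closedNbhd G u ≠ closedNbhd G v

/-- The twin-free clique number: maximum cardinality of a twin-free clique. -/
noncomputable def twinFreeCliqueNum {V : Type*} (G : SimpleGraph V) [Fintype V] : ℕ :=
  sSup {k | ∃ X : Finset V, IsTwinFreeClique G X ∧ X.card = k}

/-- Adjacency relation of the join of two graphs. -/
def joinAdj {V W : Type*} (G : SimpleGraph V) (H : SimpleGraph W) :
    V ⊕ W → V ⊕ W → Prop
  | Sum.inl a, Sum.inl b => G.Adj a b
  | Sum.inr a, Sum.inr b => H.Adj a b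
  | Sum.inl _, Sum.inr _ => True
  | Sum.inr _, Sum.inl _ => True

/-- The join `G + H`: disjoint union of `G` and `H` plus all edges between them. -/
def joinGraph {V W : Type*} (G : SimpleGraph V) (H : SimpleGraph W) :
    SimpleGraph (V ⊕ W) where
  Adj := joinAdj G H
  symm := by
    constructor
    rintro (a | a) (b | b) h
    · exact G.adj_symm h
    · trivial
    · trivial
    · exact H.adj_symm h
  loopless := by
    constructor
    rintro (a | a) h
    · exact G.irrefl h
    · exact H.irrefl h

/-- Adjacency relation of the corona product `G ⊙ H`. -/
def coronaAdj {V W : Type*} (G : SimpleGraph V) (H : SimpleGraph W) :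
    V ⊕ V × W → V ⊕ V × W → Prop
  | Sum.inl a, Sum.inl b => G.Adj a b
  | Sum.inr p, Sum.inr q => p.1 = q.1 ∧ H.Adj p.2 q.2
  | Sum.inl a, Sum.inr q => a = q.1
  | Sum.inr p, Sum.inl b => p.1 = b

/-- The corona product `G ⊙ H`: one copy of `G` and one copy of `H` for each vertex of
`G`, with the `i`-th vertex of `G` joined to every vertex of the `i`-th copy of `H`. -/
def corona {V W : Type*} (G : SimpleGraph V) (H : SimpleGraph W) :
    SimpleGraph (V ⊕ V × W) where
  Adj := coronaAdj G H
  symm := by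
    constructor
    rintro (a | p) (b | q) h
    · exact G.adj_symm h
    · exact h.symm
    · exact h.symm
    · exact ⟨h.1.symm, H.adj_symm h.2⟩
  loopless := by
    constructor
    rintro (a | p) h
    · exact G.irrefl h
    · exact H.irrefl h.2

/-- The disjoint union of copies of `H`, one copy for each element of `V`. -/
def copies (V : Type*) {W : Type*} (H : SimpleGraph W) : SimpleGraph (V × W) where
  Adj p q := p.1 = q.1 ∧ H.Adj p.2 q.2
  symm := ⟨fun _ _ h => ⟨h.1.symm, h.2.symm⟩⟩
  loopless := ⟨fun p h => H.irrefl h.2⟩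

/-- The algebraic connectivity: the second smallest eigenvalue (with multiplicity,
in nondecreasing order) of the Laplacian matrix. -/
noncomputable def algebraicConnectivity {V : Type*} (G : SimpleGraph V) [Fintype V]
    [DecidableEq V] [DecidableRel G.Adj] : ℝ :=
  (((Finset.univ.val.map ((G.posSemidef_lapMatrix ℝ).isHermitian.eigenvalues)).sort
    (· ≤ ·)).getD 1 0)

/-!
Two vertices at distance `diam G` are strongly resolved only by themselves. In diameter two every
non-adjacent pair is such a pair, so the complement of a strong resolving set is a clique and
`dim_s(H) ≥ n - ω(H)`. Conversely, let `X` be a clique. Two vertices `u, v ∈ X` are not twins, so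
some `w` is adjacent to `u` (say) but lies outside `N[v]`; then `d(v, w) = 2 = d(v, u) + d(u, w)`,
and `w ∉ X`. Together with the trivial resolution of pairs meeting `Xᶜ`, this makes `Xᶜ` a strong
resolving set, and a maximum clique gives `dim_s(H) ≤ n - ω(H)`.
-/

section StronglyResolves

variable {V : Type*} {G : SimpleGraph V} {u v w : V}

theorem stronglyResolves_left (u v : V) : StronglyResolves G u u v :=
  Or.inr (by simp)

theorem stronglyResolves_right (u v : V) : StronglyResolves G v u v :=
  Or.inl (by simp)

theorem StronglyResolves.symm (h : StronglyResolves G w u v) : StronglyResolves G w v u :=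
  Or.symm h

theorem StronglyResolves.eq_or_eq_of_dist_eq_diam (hG : G.ediam ≠ ⊤)
    (huv : G.dist u v = G.diam) (h : StronglyResolves G w u v) : w = v ∨ w = u := by
  have hconn := preconnected_of_ediam_ne_top hG
  rcases h with h | h
  · have : G.dist u w ≤ G.diam := dist_le_diam hG
    exact Or.inl ((hconn v w).dist_eq_zero_iff.mp (by omega)).symm
  · have : G.dist v w ≤ G.diam := dist_le_diam hG
    have : G.dist v u = G.dist u v := dist_comm
    exact Or.inr ((hconn u w).dist_eq_zero_iff.mp (by omega)).symm

theorem SimpleGraph.dist_eq_diam_of_diam_eq_two_of_not_adj (hdiam : G.diam = 2) (hne : u ≠ v)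
    (hadj : ¬G.Adj u v) : G.dist u v = G.diam := by
  have hG : G.ediam ≠ ⊤ := ediam_ne_top_of_diam_ne_zero (by omega)
  have : 1 < G.dist u v :=
    (preconnected_of_ediam_ne_top hG u v).one_lt_dist_of_ne_of_not_adj hne hadj
  have : G.dist u v ≤ G.diam := dist_le_diam hG
  omega

theorem IsStrongResolvingSet.isClique_compl (hdiam : G.diam = 2) {S : Set V}
    (hS : IsStrongResolvingSet G S) : G.IsClique Sᶜ := by
  intro u hu v hv hne
  by_contra hadj
  obtain ⟨w, hwS, hw⟩ := hS u v hne
  have hG : G.ediam ≠ ⊤ := ediam_ne_top_of_diam_ne_zero (by omega)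
  have huv := dist_eq_diam_of_diam_eq_two_of_not_adj hdiam hne hadj
  rcases hw.eq_or_eq_of_dist_eq_diam hG huv with rfl | rfl
  · exact hv hwS
  · exact hu hwS

end StronglyResolves

section ClosedNbhd

variable {V : Type*} {G : SimpleGraph V} {u v w : V}

theorem mem_closedNbhd_iff : w ∈ closedNbhd G v ↔ w = v ∨ G.Adj v w :=
  Iff.rfl

theorem SimpleGraph.IsClique.subset_closedNbhd {X : Set V} (hX : G.IsClique X) (hu : u ∈ X) :
    X ⊆ closedNbhd G u := by
  intro w hw
  rw [mem_closedNbhd_iff, or_iff_not_imp_left]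
  exact fun hwu => hX hu hw (Ne.symm hwu)

theorem stronglyResolves_of_mem_closedNbhd_of_notMem (huv : G.Adj u v)
    (hwu : w ∈ closedNbhd G u) (hwv : w ∉ closedNbhd G v) : StronglyResolves G w u v := by
  have huw : G.Adj u w := by
    refine (mem_closedNbhd_iff.mp hwu).resolve_left ?_
    rintro rfl
    exact hwv (Or.inr huv.symm)
  rw [mem_closedNbhd_iff, not_or] at hwv
  have hvw : G.dist v w = 2 :=
    le_antisymm (dist_le (.cons huv.symm (.cons huw .nil)))
      ((huv.symm.reachable.trans huw.reachable).one_lt_dist_of_ne_of_not_adj (Ne.symm hwv.1) hwv.2)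
  right
  rw [hvw, dist_eq_one_iff_adj.mpr huv.symm, dist_eq_one_iff_adj.mpr huw]

theorem exists_stronglyResolves_of_closedNbhd_ne (huv : G.Adj u v)
    (h : closedNbhd G u ≠ closedNbhd G v) :
    ∃ w, StronglyResolves G w u v ∧ (w ∉ closedNbhd G u ∨ w ∉ closedNbhd G v) := by
  obtain ⟨w, hw⟩ : ∃ w, ¬(w ∈ closedNbhd G u ↔ w ∈ closedNbhd G v) := by
    simpa [Set.ext_iff] using h
  by_cases hwu : w ∈ closedNbhd G u
  · have hwv : w ∉ closedNbhd G v := fun hwv => hw (iff_of_true hwu hwv)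
    exact ⟨w, stronglyResolves_of_mem_closedNbhd_of_notMem huv hwu hwv, Or.inr hwv⟩
  · have hwv : w ∈ closedNbhd G v := (not_iff.mp hw).mp hwu
    exact ⟨w, (stronglyResolves_of_mem_closedNbhd_of_notMem huv.symm hwv hwu).symm, Or.inl hwu⟩

theorem isStrongResolvingSet_compl_of_isClique
    (htwins : ∀ x y : V, x ≠ y → closedNbhd G x ≠ closedNbhd G y) {X : Set V}
    (hX : G.IsClique X) : IsStrongResolvingSet G Xᶜ := by
  intro u v hne
  by_cases hu : u ∈ X
  · by_cases hv : v ∈ X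
    · obtain ⟨w, hw, hwX⟩ :=
        exists_stronglyResolves_of_closedNbhd_ne (hX hu hv hne) (htwins u v hne)
      refine ⟨w, fun hwX' => ?_, hw⟩
      rcases hwX with h | h
      · exact h (hX.subset_closedNbhd hu hwX')
      · exact h (hX.subset_closedNbhd hv hwX')
    · exact ⟨v, hv, stronglyResolves_right u v⟩
  · exact ⟨u, hu, stronglyResolves_left u v⟩

end ClosedNbhd

section StrongDim

variable {V : Type*} [Fintype V] {G : SimpleGraph V}

theorem strongDim_le {S : Finset V} (hS : IsStrongResolvingSet G S) : strongDim G ≤ S.card :=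
  Nat.sInf_le ⟨S, hS, rfl⟩

theorem exists_isStrongResolvingSet_card_eq_strongDim :
    ∃ S : Finset V, IsStrongResolvingSet G S ∧ S.card = strongDim G := by
  have huniv : IsStrongResolvingSet G (Finset.univ : Finset V) :=
    fun u v _ => ⟨u, by simp, stronglyResolves_left u v⟩
  exact Nat.sInf_mem (s := {k | ∃ S : Finset V, IsStrongResolvingSet G S ∧ S.card = k})
    ⟨_, Finset.univ, huniv, rfl⟩

end StrongDim

theorem strongDim_eq_card_sub_cliqueNum_of_diam_two_of_no_true_twins_general {V : Type*}
    [Fintype V] (H : SimpleGraph V) (hdiam : H.diam = 2)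
    (htwins : ∀ x y : V, x ≠ y → closedNbhd H x ≠ closedNbhd H y) :
    strongDim H = Fintype.card V - H.cliqueNum := by
  classical
  apply le_antisymm
  · obtain ⟨X, hX⟩ := H.exists_isNClique_cliqueNum
    have hres : IsStrongResolvingSet H ↑Xᶜ := by
      rw [Finset.coe_compl]
      exact isStrongResolvingSet_compl_of_isClique htwins hX.isClique
    calc strongDim H ≤ Xᶜ.card := strongDim_le hres
      _ = Fintype.card V - H.cliqueNum := by rw [Finset.card_compl, hX.card_eq]
  · obtain ⟨S, hS, hcard⟩ := exists_isStrongResolvingSet_card_eq_strongDim (G := H)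
    have hclique : H.IsClique (↑Sᶜ : Set V) := by
      rw [Finset.coe_compl]
      exact hS.isClique_compl hdiam
    have := hclique.card_le_cliqueNum
    have := Finset.card_add_card_compl S
    omega

/-- Let `H` be a connected graph of diameter two and order `n` with no true
twins. Then `dim_s(H) = n − ω(H)`. -/
theorem strongDim_eq_card_sub_cliqueNum_of_diam_two_of_no_true_twins {V : Type*}
    [Fintype V] (H : SimpleGraph V) (hconn : H.Connected) (hdiam : H.diam = 2)
    (htwins : ∀ x y : V, x ≠ y → closedNbhd H x ≠ closedNbhd H y) :
    strongDim H = Fintype.card V - H.cliqueNum :=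
  strongDim_eq_card_sub_cliqueNum_of_diam_two_of_no_true_twins_general H hdiam htwins
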